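/- arXiv:2512.12265 — 8 statements merged into one kernel-verified Lean document; each statement's English description precedes it below -/
import Mathlib

section
/- Let (Ω, P) be a probability space and let X, Y, Z₁, Z₂ be real random variables such that X, Y, and the pair (Z₁, Z₂) are mutually independent (i.e., the three random elements X, Y, and (Z₁,Z₂) : Ω → ℝ² are jointly independent). Let F_X, F_Y, G₁, G₂ denote the distribution functions of X, Y, Z₁, Z₂ respectively, and assume that P[Z₁ ≤ x, Z₂ ≤ y] = min{G₁(x), G₂(y)} for all x, y ∈ ℝ (i.e., Z₁ and Z₂ are comonotonic). Set U = max{X, Z₁} and V = max{Y, Z₂}. Then for all x, y ∈ ℝ, the joint distribution function H(x,y) = P[U ≤ x, V ≤ y] satisfies H(x,y) = F_X(x)·F_Y(y)·min{G₁(x), G₂(y)}. -/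
open MeasureTheory ProbabilityTheory Set

/-- Joint distribution of `(max X Z₁, max Y Z₂)` when `X`, `Y` and the comonotonic
pair `(Z₁, Z₂)` are mutually independent. -/
theorem marshall_joint_cdf {Ω : Type*} [MeasurableSpace Ω] (P : Measure Ω)
    [IsProbabilityMeasure P] (X Y Z₁ Z₂ : Ω → ℝ)
    (hX : Measurable X) (hY : Measurable Y) (hZ₁ : Measurable Z₁) (hZ₂ : Measurable Z₂)
    (hind : iIndep
      ![MeasurableSpace.comap X inferInstance,
        MeasurableSpace.comap Y inferInstance,
        MeasurableSpace.comap (fun ω => (Z₁ ω, Z₂ ω)) inferInstance] P)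
    (F_X F_Y G₁ G₂ : ℝ → ℝ)
    (hFX : ∀ x, F_X x = (P {ω | X ω ≤ x}).toReal)
    (hFY : ∀ y, F_Y y = (P {ω | Y ω ≤ y}).toReal)
    (hG₁ : ∀ x, G₁ x = (P {ω | Z₁ ω ≤ x}).toReal)
    (hG₂ : ∀ y, G₂ y = (P {ω | Z₂ ω ≤ y}).toReal)
    (hcom : ∀ x y, (P {ω | Z₁ ω ≤ x ∧ Z₂ ω ≤ y}).toReal = min (G₁ x) (G₂ y))
    (U V : Ω → ℝ)
    (hU : ∀ ω, U ω = max (X ω) (Z₁ ω)) (hV : ∀ ω, V ω = max (Y ω) (Z₂ ω)) :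
    ∀ x y, (P {ω | U ω ≤ x ∧ V ω ≤ y}).toReal = F_X x * F_Y y * min (G₁ x) (G₂ y) := by
  intro x y
  set f : Fin 3 → Set Ω :=
    ![{ω | X ω ≤ x}, {ω | Y ω ≤ y}, {ω | Z₁ ω ≤ x ∧ Z₂ ω ≤ y}] with hf
  have hmeas : ∀ i, MeasurableSet[![MeasurableSpace.comap X inferInstance,
        MeasurableSpace.comap Y inferInstance,
        MeasurableSpace.comap (fun ω => (Z₁ ω, Z₂ ω)) inferInstance] i] (f i) := by
    intro i
    fin_cases i
    · exact ⟨Iic x, measurableSet_Iic, rfl⟩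
    · exact ⟨Iic y, measurableSet_Iic, rfl⟩
    · exact ⟨Iic x ×ˢ Iic y, (measurableSet_Iic.prod measurableSet_Iic), rfl⟩
  have hset : {ω | U ω ≤ x ∧ V ω ≤ y} = ⋂ i, f i := by
    ext ω
    simp only [hf, mem_iInter, Fin.forall_fin_succ, Fin.forall_fin_zero_pi,
      Matrix.cons_val_zero, Matrix.cons_val_one, Matrix.head_cons, mem_setOf_eq,
      hU ω, hV ω, max_le_iff]
    constructor
    · rintro ⟨⟨h1, h2⟩, h3, h4⟩
      exact ⟨h1, h3, ⟨h2, h4⟩, by simp⟩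
    · rintro ⟨h1, h3, ⟨h2, h4⟩, -⟩
      exact ⟨⟨h1, h2⟩, h3, h4⟩
  have hprod := hind.meas_iInter hmeas
  rw [hset, hprod]
  simp only [hf, Fin.prod_univ_three, Matrix.cons_val_zero, Matrix.cons_val_one,
    Matrix.head_cons, Matrix.cons_val_two, Matrix.tail_cons]
  rw [ENNReal.toReal_mul, ENNReal.toReal_mul, hcom, hFX, hFY]
end

section
/- Let φ, ψ : [0,1] → [0,1] satisfy conditions (M1)–(M3): φ(0) = 0, φ(1) = 1, φ is nondecreasing on [0,1], and u ↦ φ(u)/u is nonincreasing on (0,1] (and the same for ψ). Let F_U, F_V be distribution functions, and assume: (a) there is a strictly increasing bijection χ : ℝ → ℝ such that whenever F_U(χ(x)) > 0 and F_V(x) > 0 one has φ(F_U(χ(x)))/F_U(χ(x)) = ψ(F_V(x))/F_V(x); (b) either φ is continuous at 0, or x_U = inf{x ∈ ℝ : F_U(x) > 0} > −∞ and F_U is not continuous at x_U, and analogously either ψ is continuous at 0, or x_V = inf{x ∈ ℝ : F_V(x) > 0} > −∞ and F_V is not continuous at x_V; (c) either lim_{u→0+} φ(u)/u = ∞ or there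 exists x ∈ ℝ with F_U(x) = 0, and analogously either lim_{v→0+} ψ(v)/v = ∞ or there exists x ∈ ℝ with F_V(x) = 0. Then F_X := φ ∘ F_U and F_Y := ψ ∘ F_V are distribution functions, and there exist distribution functions G₁, G₂ such that F_U(x) = F_X(x)·G₁(x) and F_V(y) = F_Y(y)·G₂(y) for all x, y ∈ ℝ, and min{F_U(x)·ψ(F_V(y)), φ(F_U(x))·F_V(y)} = F_X(x)·F_Y(y)·min{G₁(x), G₂(y)} for all x, y ∈ ℝ. -/
open MeasureTheory Set Filter

/-- A distribution function: nondecreasing, right-continuous, with limits 0 at `-∞`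
and 1 at `+∞`. -/
def IsDistributionFunction (F : ℝ → ℝ) : Prop :=
  Monotone F ∧ (∀ x, ContinuousWithinAt F (Set.Ici x) x) ∧
    Tendsto F atBot (nhds 0) ∧ Tendsto F atTop (nhds 1)

/-!
Put `h = F / (φ ∘ F)`. Monotonicity of `φ` and antitonicity of `φ(u)/u` make `u ↦ u / φ u`
nondecreasing with `u ≤ u / φ u ≤ 1`, so `h` is nondecreasing, tends to `1` at `+∞`, and by (c)
to `0` at `-∞`; its right-continuous regularization `G` is a distribution function that agrees
with `h` wherever `F > 0`, whence `F = (φ ∘ F) · G`. The same two monotonicity properties make `φ`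
continuous on `(0, 1]`, so `φ ∘ F` is right-continuous wherever `F > 0`. Near the zeros of `F`,
(b) gives either continuity of `φ` at `0`, or an atom of `F` at its left endpoint, so that `F`
takes no values in `(0, δ)`. The copula identity is then `min (a g₁ b) (a b g₂) = a b min g₁ g₂`.
-/

open Topology

structure IsMarshallGenerator (φ : ℝ → ℝ) : Prop where
  map_zero : φ 0 = 0
  map_one : φ 1 = 1
  monotoneOn : MonotoneOn φ (Icc 0 1)
  antitoneOn_div : AntitoneOn (fun u => φ u / u) (Ioc 0 1)

namespace IsMarshallGenerator

variable {φ : ℝ → ℝ} (hφ : IsMarshallGenerator φ) {u v : ℝ}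
include hφ

theorem mem_Icc (hu : u ∈ Icc 0 1) : φ u ∈ Icc 0 1 := by
  have h0 := hφ.monotoneOn ⟨le_rfl, zero_le_one⟩ hu hu.1
  have h1 := hφ.monotoneOn hu ⟨zero_le_one, le_rfl⟩ hu.2
  rw [hφ.map_zero] at h0
  rw [hφ.map_one] at h1
  exact ⟨h0, h1⟩

theorem le_apply (hu : u ∈ Icc 0 1) : u ≤ φ u := by
  rcases hu.1.eq_or_lt with rfl | hu0
  · rw [hφ.map_zero]
  have h : φ 1 / 1 ≤ φ u / u := hφ.antitoneOn_div ⟨hu0, hu.2⟩ ⟨zero_lt_one, le_rfl⟩ hu.2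
  rw [hφ.map_one, div_one] at h
  exact (one_le_div hu0).1 h

theorem apply_pos (hu : u ∈ Ioc 0 1) : 0 < φ u :=
  hu.1.trans_le (hφ.le_apply (Ioc_subset_Icc_self hu))

theorem apply_mul_le_apply_mul (hu : 0 < u) (hv : v ≤ 1) (huv : u ≤ v) :
    φ v * u ≤ φ u * v := by
  have h : φ v / v ≤ φ u / u := hφ.antitoneOn_div ⟨hu, huv.trans hv⟩ ⟨hu.trans_le huv, hv⟩ huv
  rwa [div_le_div_iff₀ (hu.trans_le huv) hu] at h

theorem apply_mem_uIcc (hu : u ∈ Ioc 0 1) (hv : v ∈ Ioc 0 1) :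
    φ v ∈ uIcc (φ u) (v / u * φ u) := by
  rw [div_mul_eq_mul_div]
  rcases le_total u v with huv | hvu
  · refine Icc_subset_uIcc ⟨hφ.monotoneOn (Ioc_subset_Icc_self hu) (Ioc_subset_Icc_self hv) huv, ?_⟩
    rw [le_div_iff₀ hu.1]
    linarith [hφ.apply_mul_le_apply_mul hu.1 hv.2 huv]
  · refine Icc_subset_uIcc' ⟨?_, hφ.monotoneOn (Ioc_subset_Icc_self hv) (Ioc_subset_Icc_self hu) hvu⟩
    rw [div_le_iff₀ hu.1]
    linarith [hφ.apply_mul_le_apply_mul hv.1 hu.2 hvu]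

theorem continuousOn : ContinuousOn φ (Ioc 0 1) := by
  intro u hu
  have hline : Tendsto (fun v => v / u * φ u) (𝓝 u) (𝓝 (φ u)) :=
    (by fun_prop : Continuous fun v => v / u * φ u).tendsto' u _ (by simp [hu.1.ne'])
  have hmin : Tendsto (fun v => min (φ u) (v / u * φ u)) (𝓝 u) (𝓝 (φ u)) := by
    simpa using (tendsto_const_nhds (x := φ u)).min hline
  have hmax : Tendsto (fun v => max (φ u) (v / u * φ u)) (𝓝 u) (𝓝 (φ u)) := by
    simpa using (tendsto_const_nhds (x := φ u)).max hline
  exact tendsto_of_tendsto_of_tendsto_of_le_of_le' (hmin.mono_left nhdsWithin_le_nhds)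
    (hmax.mono_left nhdsWithin_le_nhds)
    (eventually_mem_nhdsWithin.mono fun v hv => (hφ.apply_mem_uIcc hu hv).1)
    (eventually_mem_nhdsWithin.mono fun v hv => (hφ.apply_mem_uIcc hu hv).2)

-- At `u = 0` the quotient is `0 / 0 = 0`.
theorem monotoneOn_div_apply : MonotoneOn (fun u => u / φ u) (Icc 0 1) := by
  intro u hu v hv huv
  rcases hu.1.eq_or_lt with rfl | hu0
  · simpa using div_nonneg hv.1 (hφ.mem_Icc hv).1
  have hv0 := hu0.trans_le huv
  have h := hφ.antitoneOn_div ⟨hu0, hu.2⟩ ⟨hv0, hv.2⟩ huv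
  rw [div_le_div_iff₀ hv0 hu0] at h
  rw [div_le_div_iff₀ (hφ.apply_pos ⟨hu0, hu.2⟩) (hφ.apply_pos ⟨hv0, hv.2⟩)]
  linarith

theorem div_apply_mem_Icc (hu : u ∈ Icc 0 1) : u / φ u ∈ Icc u 1 := by
  rcases hu.1.eq_or_lt with rfl | hu0
  · simp
  have hφu := hφ.apply_pos ⟨hu0, hu.2⟩
  exact ⟨le_div_self hu.1 hφu (hφ.mem_Icc hu).2, div_le_one_of_le₀ (hφ.le_apply hu) hφu.le⟩

end IsMarshallGenerator

theorem Monotone.isDistributionFunction_stieltjesFunction {f : ℝ → ℝ} (hf : Monotone f)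
    (hbot : Tendsto f atBot (𝓝 0)) (htop : Tendsto f atTop (𝓝 1)) :
    IsDistributionFunction hf.stieltjesFunction :=
  ⟨hf.stieltjesFunction.mono, hf.stieltjesFunction.right_continuous,
    tendsto_rightLim_atBot_of_tendsto hbot,
    tendsto_rightLim_atTop_of_tendsto htop⟩

namespace IsDistributionFunction

variable {F φ : ℝ → ℝ} (hF : IsDistributionFunction F)
include hF

theorem mem_Icc (x : ℝ) : F x ∈ Icc 0 1 :=
  ⟨le_of_tendsto hF.2.2.1 ((eventually_le_atBot x).mono fun _ hy => hF.1 hy),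
    ge_of_tendsto hF.2.2.2 ((eventually_ge_atTop x).mono fun _ hy => hF.1 hy)⟩

theorem continuousAt_of_eq_zero {x : ℝ} (hx : F x = 0) : ContinuousAt F x := by
  refine continuousAt_iff_continuous_left_right.2 ⟨?_, hF.2.1 x⟩
  refine continuousWithinAt_const.congr (fun y hy => ?_) hx
  exact le_antisymm (hx ▸ hF.1 hy) (hF.mem_Icc y).1

theorem exists_gap (hbdd : BddBelow {x | 0 < F x})
    (hjump : ¬ ContinuousAt F (sInf {x | 0 < F x})) :
    ∃ δ > 0, ∀ x, F x = 0 ∨ δ ≤ F x := by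
  set s := sInf {x | 0 < F x}
  have hs : 0 < F s :=
    (hF.mem_Icc s).1.lt_of_ne fun h => hjump (hF.continuousAt_of_eq_zero h.symm)
  refine ⟨F s, hs, fun x => ?_⟩
  rcases lt_or_ge x s with hxs | hsx
  · exact .inl (le_antisymm (not_lt.1 fun h => hxs.not_ge (csInf_le hbdd h)) (hF.mem_Icc x).1)
  · exact .inr (hF.1 hsx)

theorem tendsto_comp_of_tendsto_zero (hφ0 : φ 0 = 0)
    (hb : ContinuousWithinAt φ (Icc 0 1) 0 ∨
      (BddBelow {x | 0 < F x} ∧ ¬ ContinuousAt F (sInf {x | 0 < F x})))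
    {l : Filter ℝ} (hl : Tendsto F l (𝓝 0)) : Tendsto (fun x => φ (F x)) l (𝓝 0) := by
  rcases hb with hφ | ⟨hbdd, hjump⟩
  · rw [← hφ0]
    exact hφ.tendsto.comp (tendsto_nhdsWithin_iff.2 ⟨hl, .of_forall hF.mem_Icc⟩)
  · obtain ⟨δ, hδ, hgap⟩ := hF.exists_gap hbdd hjump
    refine tendsto_const_nhds.congr' ((hl.eventually (eventually_lt_nhds hδ)).mono fun x hx => ?_)
    dsimp only
    rw [(hgap x).resolve_right hx.not_ge, hφ0]

theorem continuousWithinAt_comp_of_pos (hφ : ContinuousOn φ (Ioc 0 1)) {x : ℝ} (hx : 0 < F x) :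
    ContinuousWithinAt (fun y => φ (F y)) (Ici x) x :=
  (hφ (F x) ⟨hx, (hF.mem_Icc x).2⟩).comp (hF.2.1 x)
    fun y hy => ⟨hx.trans_le (hF.1 hy), (hF.mem_Icc y).2⟩

theorem comp_marshallGenerator (hφ : IsMarshallGenerator φ)
    (hb : ContinuousWithinAt φ (Icc 0 1) 0 ∨
      (BddBelow {x | 0 < F x} ∧ ¬ ContinuousAt F (sInf {x | 0 < F x}))) :
    IsDistributionFunction (fun x => φ (F x)) := by
  refine ⟨fun x y hxy => hφ.monotoneOn (hF.mem_Icc x) (hF.mem_Icc y) (hF.1 hxy), fun x => ?_,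
    hF.tendsto_comp_of_tendsto_zero hφ.map_zero hb hF.2.2.1, ?_⟩
  · rcases (hF.mem_Icc x).1.eq_or_lt with hx | hx
    · have hl : Tendsto F (𝓝[≥] x) (𝓝 0) := hx ▸ hF.2.1 x
      show Tendsto _ _ (𝓝 (φ (F x)))
      rw [← hx, hφ.map_zero]
      exact hF.tendsto_comp_of_tendsto_zero hφ.map_zero hb hl
    · exact hF.continuousWithinAt_comp_of_pos hφ.continuousOn hx
  · exact tendsto_of_tendsto_of_tendsto_of_le_of_le hF.2.2.2 tendsto_const_nhds
      (fun x => hφ.le_apply (hF.mem_Icc x)) (fun x => (hφ.mem_Icc (hF.mem_Icc x)).2)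

theorem tendsto_div_comp_atBot
    (hc : Tendsto (fun u => φ u / u) (𝓝[>] 0) atTop ∨ ∃ x, F x = 0) :
    Tendsto (fun x => F x / φ (F x)) atBot (𝓝 0) := by
  by_cases hzero : ∃ x, F x = 0
  · obtain ⟨x₀, hx₀⟩ := hzero
    refine tendsto_const_nhds.congr' ((eventually_le_atBot x₀).mono fun x hx => ?_)
    dsimp only
    rw [le_antisymm (hx₀ ▸ hF.1 hx) (hF.mem_Icc x).1, zero_div]
  · have hpos : ∀ x, 0 < F x := fun x => (hF.mem_Icc x).1.lt_of_ne' fun h => hzero ⟨x, h⟩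
    have hFbot : Tendsto F atBot (𝓝[>] 0) :=
      tendsto_nhdsWithin_iff.2 ⟨hF.2.2.1, .of_forall hpos⟩
    simpa only [Function.comp_def, Pi.inv_def, inv_div] using
      ((hc.resolve_right hzero).comp hFbot).inv_tendsto_atTop

theorem exists_eq_apply_mul (hφ : IsMarshallGenerator φ)
    (hc : Tendsto (fun u => φ u / u) (𝓝[>] 0) atTop ∨ ∃ x, F x = 0) :
    ∃ G, IsDistributionFunction G ∧ ∀ x, F x = φ (F x) * G x := by
  have hmono : Monotone fun x => F x / φ (F x) := fun x y hxy =>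
    hφ.monotoneOn_div_apply (hF.mem_Icc x) (hF.mem_Icc y) (hF.1 hxy)
  have htop : Tendsto (fun x => F x / φ (F x)) atTop (𝓝 1) :=
    tendsto_of_tendsto_of_tendsto_of_le_of_le hF.2.2.2 tendsto_const_nhds
      (fun x => (hφ.div_apply_mem_Icc (hF.mem_Icc x)).1)
      (fun x => (hφ.div_apply_mem_Icc (hF.mem_Icc x)).2)
  refine ⟨hmono.stieltjesFunction,
    hmono.isDistributionFunction_stieltjesFunction (hF.tendsto_div_comp_atBot hc) htop,
    fun x => ?_⟩
  rcases (hF.mem_Icc x).1.eq_or_lt with hx | hx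
  · rw [← hx, hφ.map_zero, zero_mul]
  · have hcont : ContinuousWithinAt (fun y => F y / φ (F y)) (Ici x) x :=
      (hF.2.1 x).div (hF.continuousWithinAt_comp_of_pos hφ.continuousOn hx)
        (hφ.apply_pos ⟨hx, (hF.mem_Icc x).2⟩).ne'
    rw [Monotone.stieltjesFunction_eq, hcont.rightLim_eq,
      mul_div_cancel₀ _ (hφ.apply_pos ⟨hx, (hF.mem_Icc x).2⟩).ne']

end IsDistributionFunction

theorem marshall_shock_representation_general (φ ψ : ℝ → ℝ)
    -- (M1)-(M3) for φ, and φ maps [0,1] into [0,1]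
    (hφ0 : φ 0 = 0) (hφ1 : φ 1 = 1)
    (hφmono : MonotoneOn φ (Icc (0:ℝ) 1))
    (hφstar : AntitoneOn (fun u => φ u / u) (Ioc (0:ℝ) 1))
    -- (M1)-(M3) for ψ, and ψ maps [0,1] into [0,1]
    (hψ0 : ψ 0 = 0) (hψ1 : ψ 1 = 1)
    (hψmono : MonotoneOn ψ (Icc (0:ℝ) 1))
    (hψstar : AntitoneOn (fun v => ψ v / v) (Ioc (0:ℝ) 1))
    (F_U F_V : ℝ → ℝ)
    (hFU : IsDistributionFunction F_U) (hFV : IsDistributionFunction F_V)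
    -- assumption (b)
    (hbφ : ContinuousWithinAt φ (Icc (0:ℝ) 1) 0 ∨
      (BddBelow {x : ℝ | 0 < F_U x} ∧ ¬ ContinuousAt F_U (sInf {x : ℝ | 0 < F_U x})))
    (hbψ : ContinuousWithinAt ψ (Icc (0:ℝ) 1) 0 ∨
      (BddBelow {x : ℝ | 0 < F_V x} ∧ ¬ ContinuousAt F_V (sInf {x : ℝ | 0 < F_V x})))
    -- assumption (c)
    (hcφ : Tendsto (fun u => φ u / u) (nhdsWithin 0 (Ioi (0:ℝ))) atTop ∨
      ∃ x : ℝ, F_U x = 0)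
    (hcψ : Tendsto (fun v => ψ v / v) (nhdsWithin 0 (Ioi (0:ℝ))) atTop ∨
      ∃ x : ℝ, F_V x = 0) :
    IsDistributionFunction (fun x => φ (F_U x)) ∧
    IsDistributionFunction (fun y => ψ (F_V y)) ∧
    ∃ G₁ G₂ : ℝ → ℝ, IsDistributionFunction G₁ ∧ IsDistributionFunction G₂ ∧
      (∀ x, F_U x = φ (F_U x) * G₁ x) ∧ (∀ y, F_V y = ψ (F_V y) * G₂ y) ∧
      (∀ x y, min (F_U x * ψ (F_V y)) (φ (F_U x) * F_V y) =
        φ (F_U x) * ψ (F_V y) * min (G₁ x) (G₂ y)) := by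
  have hφ : IsMarshallGenerator φ := ⟨hφ0, hφ1, hφmono, hφstar⟩
  have hψ : IsMarshallGenerator ψ := ⟨hψ0, hψ1, hψmono, hψstar⟩
  obtain ⟨G₁, hG₁, hFU_eq⟩ := hFU.exists_eq_apply_mul hφ hcφ
  obtain ⟨G₂, hG₂, hFV_eq⟩ := hFV.exists_eq_apply_mul hψ hcψ
  refine ⟨hFU.comp_marshallGenerator hφ hbφ, hFV.comp_marshallGenerator hψ hbψ,
    G₁, G₂, hG₁, hG₂, hFU_eq, hFV_eq, fun x y => ?_⟩
  have hnonneg : 0 ≤ φ (F_U x) * ψ (F_V y) :=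
    mul_nonneg (hφ.mem_Icc (hFU.mem_Icc x)).1 (hψ.mem_Icc (hFV.mem_Icc y)).1
  calc min (F_U x * ψ (F_V y)) (φ (F_U x) * F_V y)
      = min (φ (F_U x) * ψ (F_V y) * G₁ x) (φ (F_U x) * ψ (F_V y) * G₂ y) := by
        congr 1
        · linear_combination ψ (F_V y) * hFU_eq x
        · linear_combination φ (F_U x) * hFV_eq y
    _ = φ (F_U x) * ψ (F_V y) * min (G₁ x) (G₂ y) := (mul_min_of_nonneg _ _ hnonneg).symm

/-- Given Marshall generators `φ, ψ` and marginal distribution functions `F_U, F_V`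
satisfying the compatibility assumptions (a)-(c), the functions `φ ∘ F_U` and `ψ ∘ F_V`
are distribution functions and there exist distribution functions `G₁, G₂` realizing the
Marshall copula `min {u ψ(v), φ(u) v}` as a comonotonic shock model. -/
theorem marshall_shock_representation (φ ψ : ℝ → ℝ)
    -- (M1)-(M3) for φ, and φ maps [0,1] into [0,1]
    (hφ01 : ∀ u ∈ Icc (0:ℝ) 1, φ u ∈ Icc (0:ℝ) 1)
    (hφ0 : φ 0 = 0) (hφ1 : φ 1 = 1)
    (hφmono : MonotoneOn φ (Icc (0:ℝ) 1))
    (hφstar : AntitoneOn (fun u => φ u / u) (Ioc (0:ℝ) 1))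
    -- (M1)-(M3) for ψ, and ψ maps [0,1] into [0,1]
    (hψ01 : ∀ v ∈ Icc (0:ℝ) 1, ψ v ∈ Icc (0:ℝ) 1)
    (hψ0 : ψ 0 = 0) (hψ1 : ψ 1 = 1)
    (hψmono : MonotoneOn ψ (Icc (0:ℝ) 1))
    (hψstar : AntitoneOn (fun v => ψ v / v) (Ioc (0:ℝ) 1))
    (F_U F_V : ℝ → ℝ)
    (hFU : IsDistributionFunction F_U) (hFV : IsDistributionFunction F_V)
    -- assumption (a)
    (χ : ℝ → ℝ) (hχ : StrictMono χ) (hχbij : Function.Bijective χ)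
    (ha : ∀ x : ℝ, 0 < F_U (χ x) → 0 < F_V x →
      φ (F_U (χ x)) / F_U (χ x) = ψ (F_V x) / F_V x)
    -- assumption (b)
    (hbφ : ContinuousWithinAt φ (Icc (0:ℝ) 1) 0 ∨
      (BddBelow {x : ℝ | 0 < F_U x} ∧ ¬ ContinuousAt F_U (sInf {x : ℝ | 0 < F_U x})))
    (hbψ : ContinuousWithinAt ψ (Icc (0:ℝ) 1) 0 ∨
      (BddBelow {x : ℝ | 0 < F_V x} ∧ ¬ ContinuousAt F_V (sInf {x : ℝ | 0 < F_V x})))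
    -- assumption (c)
    (hcφ : Tendsto (fun u => φ u / u) (nhdsWithin 0 (Ioi (0:ℝ))) atTop ∨
      ∃ x : ℝ, F_U x = 0)
    (hcψ : Tendsto (fun v => ψ v / v) (nhdsWithin 0 (Ioi (0:ℝ))) atTop ∨
      ∃ x : ℝ, F_V x = 0) :
    IsDistributionFunction (fun x => φ (F_U x)) ∧
    IsDistributionFunction (fun y => ψ (F_V y)) ∧
    ∃ G₁ G₂ : ℝ → ℝ, IsDistributionFunction G₁ ∧ IsDistributionFunction G₂ ∧
      (∀ x, F_U x = φ (F_U x) * G₁ x) ∧ (∀ y, F_V y = ψ (F_V y) * G₂ y) ∧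
      (∀ x y, min (F_U x * ψ (F_V y)) (φ (F_U x) * F_V y) =
        φ (F_U x) * ψ (F_V y) * min (G₁ x) (G₂ y)) :=
  marshall_shock_representation_general φ ψ hφ0 hφ1 hφmono hφstar hψ0 hψ1 hψmono hψstar F_U F_V hFU
    hFV hbφ hbψ hcφ hcψ
end

section
/- Let F_X and G₁ be distribution functions and define F_U(x) = F_X(x)·G₁(x) for x ∈ ℝ. For u ∈ (0,1] let F_U⁻¹(u) = inf{x ∈ ℝ : F_U(x) ≥ u}. Then for all u, u′ in the range of F_U with 0 < u ≤ u′ ≤ 1: (i) F_X(F_U⁻¹(u)) ≤ F_X(F_U⁻¹(u′)); and (ii) F_X(F_U⁻¹(u))/u ≥ F_X(F_U⁻¹(u′))/u′, i.e., the function f̂(u) = F_X(F_U⁻¹(u)) is nondecreasing and f̂(u)/u is nonincreasing on the positive part of the range of F_U. -/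
open MeasureTheory Set Filter

/-- The generalized inverse `F⁻¹(u) = inf {x | F x ≥ u}` of a distribution function. -/
noncomputable def genInv (F : ℝ → ℝ) (u : ℝ) : ℝ := sInf {x : ℝ | u ≤ F x}

/-- If `F_U = F_X · G₁` with `F_X, G₁` distribution functions, then on the positive part
of the range of `F_U`, the function `f̂(u) = F_X(F_U⁻¹(u))` is nondecreasing and
`f̂(u)/u` is nonincreasing. -/
theorem generator_monotonicity (F_X G₁ : ℝ → ℝ)
    (hFX : IsDistributionFunction F_X) (hG₁ : IsDistributionFunction G₁)
    (F_U : ℝ → ℝ) (hFU : ∀ x, F_U x = F_X x * G₁ x)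
    (u u' : ℝ) (hu : u ∈ Set.range F_U) (hu' : u' ∈ Set.range F_U)
    (h0 : 0 < u) (huu' : u ≤ u') (h1 : u' ≤ 1) :
    F_X (genInv F_U u) ≤ F_X (genInv F_U u') ∧
    F_X (genInv F_U u') / u' ≤ F_X (genInv F_U u) / u := by
  obtain ⟨hFXmono, hFXrc, hFXbot, hFXtop⟩ := hFX
  obtain ⟨hGmono, hGrc, hGbot, hGtop⟩ := hG₁
  have h0' : 0 < u' := h0.trans_le huu'
  have hFXnn : ∀ x, 0 ≤ F_X x := fun x =>
    le_of_tendsto hFXbot ((eventually_le_atBot x).mono fun y hy => hFXmono hy)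
  have hGnn : ∀ x, 0 ≤ G₁ x := fun x =>
    le_of_tendsto hGbot ((eventually_le_atBot x).mono fun y hy => hGmono hy)
  have hFUmono : Monotone F_U := fun x y hxy => by
    rw [hFU, hFU]
    exact mul_le_mul (hFXmono hxy) (hGmono hxy) (hGnn x) (hFXnn y)
  have hFUrc : ∀ x, ContinuousWithinAt F_U (Set.Ici x) x := fun x => by
    have h := (hFXrc x).mul (hGrc x)
    exact h.congr (fun y _ => hFU y) (hFU x)
  have hGle1 : ∀ x, G₁ x ≤ 1 := fun x =>
    ge_of_tendsto hGtop ((eventually_ge_atTop x).mono fun y hy => hGmono hy)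
  have hFUbot : Tendsto F_U atBot (nhds 0) := by
    refine tendsto_of_tendsto_of_tendsto_of_le_of_le tendsto_const_nhds hFXbot
      (fun x => by rw [hFU]; exact mul_nonneg (hFXnn x) (hGnn x))
      (fun x => by rw [hFU]; nlinarith [hFXnn x, hGnn x, hGle1 x])
  -- key facts for each v in the positive range
  have key : ∀ v : ℝ, v ∈ Set.range F_U → 0 < v →
      BddBelow {x | v ≤ F_U x} ∧ {x | v ≤ F_U x}.Nonempty ∧ F_U (genInv F_U v) = v := by
    rintro v ⟨x0, hx0⟩ hv
    set S := {x | v ≤ F_U x} with hS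
    have hx0S : x0 ∈ S := by simp [hS, hx0]
    have hSbdd : BddBelow S := by
      obtain ⟨y, hy⟩ := (hFUbot.eventually_lt_const hv).exists
      exact ⟨y, fun z hz => le_of_not_gt fun hlt =>
        absurd (le_trans hz (hFUmono hlt.le)) (not_le.mpr hy)⟩
    refine ⟨hSbdd, ⟨x0, hx0S⟩, le_antisymm ?_ ?_⟩
    · have : genInv F_U v ≤ x0 := csInf_le hSbdd hx0S
      calc F_U (genInv F_U v) ≤ F_U x0 := hFUmono this
        _ = v := hx0
    · have hcl : genInv F_U v ∈ closure S := csInf_mem_closure ⟨x0, hx0S⟩ hSbdd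
      have hsub : S ⊆ Set.Ici (genInv F_U v) := fun z hz => csInf_le hSbdd hz
      have hc : ContinuousWithinAt F_U S (genInv F_U v) := (hFUrc _).mono hsub
      haveI := mem_closure_iff_nhdsWithin_neBot.mp hcl
      have hc' : Tendsto F_U (nhdsWithin (genInv F_U v) S) (nhds (F_U (genInv F_U v))) := hc
      exact ge_of_tendsto hc' (eventually_mem_nhdsWithin.mono fun z hz => hz)
  obtain ⟨hbdd, _, hfu⟩ := key u hu h0
  obtain ⟨_, hne', hfu'⟩ := key u' hu' h0'
  have haa' : genInv F_U u ≤ genInv F_U u' :=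
    csInf_le_csInf hbdd hne' fun z hz => le_trans huu' hz
  refine ⟨hFXmono haa', ?_⟩
  rw [div_le_div_iff₀ h0' h0]
  rw [hFU] at hfu hfu'
  nlinarith [hFXnn (genInv F_U u), hFXnn (genInv F_U u'),
    hGmono haa', mul_nonneg (hFXnn (genInv F_U u)) (hFXnn (genInv F_U u'))]
end

section
/- Let u, v ∈ (0,1] and let a, b ∈ ℝ with a ≥ 0 and b ≥ 0. Then max{0, uv − ab} = (u + a)(v + b) · max{0, u/(u + a) + v/(v + b) − 1}. In particular, for any functions f, g with f(u) ≥ 0 and g(v) ≥ 0: max{0, uv − f(u)g(v)} = (u + f(u))(v + g(v)) · max{0, u/(u + f(u)) + v/(v + g(v)) − 1}. -/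
lemma rmm_key (u v a b : ℝ) (hu : 0 < u) (hv : 0 < v) (ha : 0 ≤ a) (hb : 0 ≤ b) :
    max 0 (u * v - a * b) =
      (u + a) * (v + b) * max 0 (u / (u + a) + v / (v + b) - 1) := by
  have hua : 0 < u + a := by linarith
  have hvb : 0 < v + b := by linarith
  have h : u / (u + a) + v / (v + b) - 1 = (u * v - a * b) / ((u + a) * (v + b)) := by
    field_simp
    ring
  rw [h, mul_max_of_nonneg _ _ (by positivity : (0:ℝ) ≤ (u + a) * (v + b)), mul_zero,
    mul_div_cancel₀ _ (by positivity)]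

/-- Algebraic factorization: for `u, v ∈ (0,1]` and `a, b ≥ 0`,
`max {0, uv - ab} = (u+a)(v+b) · max {0, u/(u+a) + v/(v+b) - 1}`; in particular this
holds with `a = f u`, `b = g v` for any functions `f, g` nonnegative at `u, v`. -/
theorem rmm_factorization (u v : ℝ) (hu : u ∈ Set.Ioc (0:ℝ) 1) (hv : v ∈ Set.Ioc (0:ℝ) 1)
    (a b : ℝ) (ha : 0 ≤ a) (hb : 0 ≤ b) (f g : ℝ → ℝ) (hf : 0 ≤ f u) (hg : 0 ≤ g v) :
    max 0 (u * v - a * b) =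
      (u + a) * (v + b) * max 0 (u / (u + a) + v / (v + b) - 1) ∧
    max 0 (u * v - f u * g v) =
      (u + f u) * (v + g v) * max 0 (u / (u + f u) + v / (v + g v) - 1) := by
  exact ⟨rmm_key u v a b hu.1 hv.1 ha hb, rmm_key u v (f u) (g v) hu.1 hv.1 hf hg⟩
end

section
/- For every a ∈ (0,1] and all u, v ∈ [0,1], the Eyraud–Farlie–Gumbel–Morgenstern function C_a(u,v) = uv − a²·uv·(1−u)(1−v) satisfies C_a(u,v) = max{0, uv − f_a(u)·f_a(v)}, where f_a(t) = a·t·(1 − t); in particular uv − a²·uv·(1−u)(1−v) ≥ 0 on [0,1]², so C_a is an RMM copula with both generators equal to f_a. -/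
/-- The EFGM copula `C_a(u,v) = uv - a² uv (1-u)(1-v)` equals the RMM copula
`max {0, uv - f_a(u) f_a(v)}` with `f_a(t) = a t (1-t)`; in particular it is
nonnegative on `[0,1]²`. -/
theorem efgm_is_rmm (a : ℝ) (ha : a ∈ Set.Ioc (0:ℝ) 1)
    (u v : ℝ) (hu : u ∈ Set.Icc (0:ℝ) 1) (hv : v ∈ Set.Icc (0:ℝ) 1) :
    u * v - a ^ 2 * u * v * (1 - u) * (1 - v) =
      max 0 (u * v - (a * u * (1 - u)) * (a * v * (1 - v))) ∧
    0 ≤ u * v - a ^ 2 * u * v * (1 - u) * (1 - v) := by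
  obtain ⟨ha0, ha1⟩ := ha
  obtain ⟨hu0, hu1⟩ := hu
  obtain ⟨hv0, hv1⟩ := hv
  have hnn : 0 ≤ u * v - a ^ 2 * u * v * (1 - u) * (1 - v) := by
    have h1 : a ^ 2 * ((1 - u) * (1 - v)) ≤ 1 := by
      have ha2 : a ^ 2 ≤ 1 := by nlinarith
      have h2 : (1 - u) * (1 - v) ≤ 1 := by nlinarith
      have h3 : 0 ≤ (1 - u) * (1 - v) := mul_nonneg (by linarith) (by linarith)
      nlinarith
    have huv : 0 ≤ u * v := mul_nonneg hu0 hv0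
    nlinarith [mul_le_of_le_one_right huv h1]
  constructor
  · rw [max_eq_right (by nlinarith [hnn])]
    ring
  · exact hnn
end

section
/- Let α ∈ (0,1] and β satisfy 1 − α ≤ β ≤ 1 with β > 0. Then the function f : [0,1] → ℝ defined by f(t) = t^α·(1 − t^β) is an RMM generator: f(0) = 0, f(1) = 0, the function t ↦ t + t^α − t^{α+β} is nondecreasing on [0,1], and the function t ↦ t^{α−1}·(1 − t^β) is nonincreasing on (0,1]. -/
open Set

/-- For `α ∈ (0,1]` and `0 < β ≤ 1` with `1 - α ≤ β`, the function
`f(t) = t^α (1 - t^β)` is an RMM generator. -/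
theorem general_power_generator (α β : ℝ) (hα : α ∈ Set.Ioc (0:ℝ) 1)
    (hβpos : 0 < β) (hβ1 : β ≤ 1) (hαβ : 1 - α ≤ β)
    (f : ℝ → ℝ) (hf : ∀ t, f t = t ^ α * (1 - t ^ β)) :
    f 0 = 0 ∧ f 1 = 0 ∧
    MonotoneOn (fun t => t + t ^ α - t ^ (α + β)) (Icc (0:ℝ) 1) ∧
    AntitoneOn (fun t => t ^ (α - 1) * (1 - t ^ β)) (Ioc (0:ℝ) 1) := by
  obtain ⟨hα0, hα1⟩ := hα
  refine ⟨by simp [hf, Real.zero_rpow hα0.ne'], by simp [hf], ?_, ?_⟩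
  · -- monotone part via derivative
    have hconv : Convex ℝ (Icc (0:ℝ) 1) := convex_Icc 0 1
    have hint : interior (Icc (0:ℝ) 1) = Ioo 0 1 := interior_Icc
    apply monotoneOn_of_deriv_nonneg hconv
    · apply ContinuousOn.sub
      · apply ContinuousOn.add continuousOn_id
        intro x hx
        exact (Real.continuousAt_rpow_const x α (Or.inr hα0.le)).continuousWithinAt
      · intro x hx
        exact (Real.continuousAt_rpow_const x (α + β)
          (Or.inr (by positivity : (0:ℝ) ≤ α + β))).continuousWithinAt
    · rw [hint]
      intro x hx
      have hx0 : x ≠ 0 := ne_of_gt hx.1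
      exact (((hasDerivAt_id x).add
        (Real.hasDerivAt_rpow_const (Or.inl hx0))).sub
        (Real.hasDerivAt_rpow_const (Or.inl hx0))).differentiableAt.differentiableWithinAt
    · rw [hint]
      intro x hx
      have hx0 : (0:ℝ) < x := hx.1
      have hx1 : x ≤ 1 := hx.2.le
      have hd : HasDerivAt (fun t : ℝ => t + t ^ α - t ^ (α + β))
          (1 + α * x ^ (α - 1) - (α + β) * x ^ (α + β - 1)) x :=
        ((hasDerivAt_id x).add (Real.hasDerivAt_rpow_const (Or.inl hx0.ne'))).sub
          (Real.hasDerivAt_rpow_const (Or.inl hx0.ne'))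
      rw [hd.deriv]
      have hsplit : x ^ (α + β - 1) = x ^ (α - 1) * x ^ β := by
        rw [← Real.rpow_add hx0]; ring_nf
      have hA : 0 < x ^ (α - 1) := Real.rpow_pos_of_pos hx0 _
      have hB0 : 0 < x ^ β := Real.rpow_pos_of_pos hx0 _
      have hB1 : x ^ β ≤ 1 := Real.rpow_le_one hx0.le hx1 hβpos.le
      have hAB : x ^ (α + β - 1) ≤ 1 :=
        Real.rpow_le_one hx0.le hx1 (by linarith)
      rw [hsplit] at hAB
      rw [hsplit]
      nlinarith [mul_pos hA hB0, mul_nonneg hA.le (sub_nonneg.2 hB1)]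
  · -- antitone part
    intro x hx y hy hxy
    have hx0 : (0:ℝ) < x := hx.1
    have hy0 : (0:ℝ) < y := hy.1
    have hrw : ∀ z : ℝ, 0 < z →
        z ^ (α - 1) * (1 - z ^ β) = z ^ (α - 1) - z ^ (α + β - 1) := by
      intro z hz
      rw [mul_sub, mul_one, ← Real.rpow_add hz]
      ring_nf
    simp only [hrw x hx0, hrw y hy0]
    have h1 : y ^ (α - 1) ≤ x ^ (α - 1) :=
      Real.rpow_le_rpow_of_nonpos hx0 hxy (by linarith)
    have h2 : x ^ (α + β - 1) ≤ y ^ (α + β - 1) :=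
      Real.rpow_le_rpow hx0.le hxy (by linarith)
    linarith
end

section
/- For all α, β ∈ (0,1], the function C_{α,β} : [0,1]² → ℝ defined by C_{α,β}(u,v) = max{0, uv − (u^α − u)(v^β − v)} is a copula: C_{α,β}(u,0) = C_{α,β}(0,v) = 0 and C_{α,β}(u,1) = u, C_{α,β}(1,v) = v for all u, v ∈ [0,1], and for all 0 ≤ u₁ ≤ u₂ ≤ 1 and 0 ≤ v₁ ≤ v₂ ≤ 1 the rectangle inequality C_{α,β}(u₂,v₂) − C_{α,β}(u₁,v₂) − C_{α,β}(u₂,v₁) + C_{α,β}(u₁,v₁) ≥ 0 holds. -/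
open Set

private lemma rpow_self_le' {γ x : ℝ} (hγ0 : 0 < γ) (hγ1 : γ ≤ 1) (hx0 : 0 ≤ x) (hx1 : x ≤ 1) :
    x ≤ x ^ γ := by
  rcases hx0.eq_or_lt with h | h
  · rw [← h, Real.zero_rpow hγ0.ne']
  · calc x = x ^ (1:ℝ) := (Real.rpow_one x).symm
    _ ≤ x ^ γ := Real.rpow_le_rpow_of_exponent_ge h hx1 hγ1

private lemma ratio_antitone' {γ x y : ℝ} (hγ0 : 0 < γ) (_hγ1 : γ ≤ 1) (hx : 0 ≤ x)
    (hxy : x ≤ y) (_hy : y ≤ 1) : x * (y ^ γ - y) ≤ y * (x ^ γ - x) := by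
  rcases hx.eq_or_lt with h | hx
  · rw [← h, Real.zero_rpow hγ0.ne']
    simp
  · have hy0 : 0 < y := hx.trans_le hxy
    have h1 : x ^ (1 - γ) ≤ y ^ (1 - γ) := Real.rpow_le_rpow hx.le hxy (by linarith)
    have hxe : x ^ γ * x ^ (1 - γ) = x := by
      rw [← Real.rpow_add hx]
      norm_num
    have hye : y ^ γ * y ^ (1 - γ) = y := by
      rw [← Real.rpow_add hy0]
      norm_num
    have h2 : x ^ γ * x ^ (1 - γ) * y ^ γ ≤ x ^ γ * y ^ (1 - γ) * y ^ γ := by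
      have h3 := mul_le_mul_of_nonneg_left h1 (Real.rpow_nonneg hx.le γ)
      exact mul_le_mul_of_nonneg_right h3 (Real.rpow_nonneg hy0.le γ)
    have h4 : x * y ^ γ ≤ y * x ^ γ := by
      calc x * y ^ γ = x ^ γ * x ^ (1 - γ) * y ^ γ := by rw [hxe]
        _ ≤ x ^ γ * y ^ (1 - γ) * y ^ γ := h2
        _ = x ^ γ * (y ^ γ * y ^ (1 - γ)) := by ring
        _ = y * x ^ γ := by rw [hye]; ring
    nlinarith [h4]

/-- The function under the max. -/
private noncomputable def Df (α β u v : ℝ) : ℝ := u * v - (u ^ α - u) * (v ^ β - v)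

private lemma Df_comm (α β u v : ℝ) : Df α β u v = Df β α v u := by
  unfold Df; ring

private lemma Df_zero_left {α : ℝ} (hα0 : 0 < α) (β v : ℝ) : Df α β 0 v = 0 := by
  unfold Df
  rw [Real.zero_rpow hα0.ne']
  ring

private lemma Df_zero_right {β : ℝ} (hβ0 : 0 < β) (α u : ℝ) : Df α β u 0 = 0 := by
  unfold Df
  rw [Real.zero_rpow hβ0.ne']
  ring

/-- Monotonicity in the first coordinate on the nonnegativity region. -/
private lemma Df_mono_u {α β : ℝ} (hα0 : 0 < α) (hα1 : α ≤ 1) (hβ0 : 0 < β) (hβ1 : β ≤ 1)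
    {v x y : ℝ} (hv0 : 0 ≤ v) (hv1 : v ≤ 1) (hx : 0 < x) (hxy : x ≤ y) (hy : y ≤ 1)
    (hD : 0 ≤ Df α β x v) : Df α β x v ≤ Df α β y v := by
  have hg : 0 ≤ v ^ β - v := sub_nonneg.2 (rpow_self_le' hβ0 hβ1 hv0 hv1)
  have hr := ratio_antitone' hα0 hα1 hx.le hxy hy
  unfold Df at hD ⊢
  nlinarith [mul_nonneg (sub_nonneg.2 hxy) hD, mul_nonneg hg (sub_nonneg.2 hr), hx]

private lemma Df_mono_v {α β : ℝ} (hα0 : 0 < α) (hα1 : α ≤ 1) (hβ0 : 0 < β) (hβ1 : β ≤ 1)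
    {u x y : ℝ} (hu0 : 0 ≤ u) (hu1 : u ≤ 1) (hx : 0 < x) (hxy : x ≤ y) (hy : y ≤ 1)
    (hD : 0 ≤ Df α β u x) : Df α β u x ≤ Df α β u y := by
  rw [Df_comm α β u x, Df_comm α β u y]
  rw [Df_comm α β u x] at hD
  exact Df_mono_u hβ0 hβ1 hα0 hα1 hu0 hu1 hx hxy hy hD

/-- Monotonicity of `max 0 (Df ...)` in the first coordinate. -/
private lemma Cf_mono_u {α β : ℝ} (hα0 : 0 < α) (hα1 : α ≤ 1) (hβ0 : 0 < β) (hβ1 : β ≤ 1)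
    {v x y : ℝ} (hv0 : 0 ≤ v) (hv1 : v ≤ 1) (hx : 0 ≤ x) (hxy : x ≤ y) (hy : y ≤ 1) :
    max 0 (Df α β x v) ≤ max 0 (Df α β y v) := by
  rcases le_or_gt (Df α β x v) 0 with h | h
  · rw [max_eq_left h]; exact le_max_left _ _
  · have hx' : 0 < x := by
      rcases hx.eq_or_lt with h0 | h0
      · rw [← h0, Df_zero_left hα0] at h; exact absurd h (lt_irrefl 0)
      · exact h0
    have h2 := Df_mono_u hα0 hα1 hβ0 hβ1 hv0 hv1 hx' hxy hy h.le
    rw [max_eq_right h.le, max_eq_right (h.le.trans h2)]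
    exact h2

/-- Rectangle inequality for `Df` when the lower-right corner is in the nonneg region. -/
private lemma Df_vol {α β : ℝ} (hα0 : 0 < α) (hα1 : α ≤ 1) (hβ0 : 0 < β) (hβ1 : β ≤ 1)
    {u₁ u₂ v₁ v₂ : ℝ} (hu1 : 0 ≤ u₁) (hu12 : u₁ ≤ u₂) (hu2 : u₂ ≤ 1) (hu2p : 0 < u₂)
    (hv1 : 0 < v₁) (hv12 : v₁ ≤ v₂) (hv2 : v₂ ≤ 1)
    (hD : 0 ≤ Df α β u₂ v₁) :
    0 ≤ Df α β u₂ v₂ - Df α β u₁ v₂ - Df α β u₂ v₁ + Df α β u₁ v₁ := by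
  have hu1' : u₁ ≤ 1 := hu12.trans hu2
  have hv2nn : 0 ≤ v₂ := hv1.le.trans hv12
  have key : ((u₂ ^ α - u₂) - (u₁ ^ α - u₁)) * ((v₂ ^ β - v₂) - (v₁ ^ β - v₁))
      ≤ (u₂ - u₁) * (v₂ - v₁) := by
    rcases le_or_gt ((u₂ ^ α - u₂) - (u₁ ^ α - u₁)) 0 with hf | hf <;>
      rcases le_or_gt ((v₂ ^ β - v₂) - (v₁ ^ β - v₁)) 0 with hg | hg
    · -- both nonpos
      have ha : u₁ ^ α ≤ u₂ ^ α := Real.rpow_le_rpow hu1 hu12 hα0.le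
      have hb : v₁ ^ β ≤ v₂ ^ β := Real.rpow_le_rpow hv1.le hv12 hβ0.le
      have h1 : -((u₂ ^ α - u₂) - (u₁ ^ α - u₁)) ≤ u₂ - u₁ := by linarith
      have h2 : -((v₂ ^ β - v₂) - (v₁ ^ β - v₁)) ≤ v₂ - v₁ := by linarith
      have h3 := mul_le_mul h1 h2 (by linarith) (by linarith)
      nlinarith [h3]
    · nlinarith [mul_nonneg (neg_nonneg.2 hf) hg.le,
        mul_nonneg (sub_nonneg.2 hu12) (sub_nonneg.2 hv12)]
    · nlinarith [mul_nonneg hf.le (neg_nonneg.2 hg),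
        mul_nonneg (sub_nonneg.2 hu12) (sub_nonneg.2 hv12)]
    · -- both pos
      have hr1 := ratio_antitone' hα0 hα1 hu1 hu12 hu2
      have hr2 := ratio_antitone' hβ0 hβ1 hv1.le hv12 hv2
      have hfu2 : 0 ≤ u₂ ^ α - u₂ := sub_nonneg.2 (rpow_self_le' hα0 hα1 (hu1.trans hu12) hu2)
      have hgv1 : 0 ≤ v₁ ^ β - v₁ := sub_nonneg.2 (rpow_self_le' hβ0 hβ1 hv1.le (hv12.trans hv2))
      have h1 : u₂ * ((u₂ ^ α - u₂) - (u₁ ^ α - u₁)) ≤ (u₂ ^ α - u₂) * (u₂ - u₁) := by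
        nlinarith [hr1]
      have h2 : v₁ * ((v₂ ^ β - v₂) - (v₁ ^ β - v₁)) ≤ (v₁ ^ β - v₁) * (v₂ - v₁) := by
        nlinarith [hr2]
      have h3 := mul_le_mul h1 h2 (mul_nonneg hv1.le hg.le)
        (mul_nonneg hfu2 (by linarith))
      have h4 : (u₂ ^ α - u₂) * (v₁ ^ β - v₁) ≤ u₂ * v₁ := by
        unfold Df at hD; linarith
      have h5 : (0:ℝ) ≤ (u₂ - u₁) * (v₂ - v₁) :=
        mul_nonneg (by linarith) (by linarith)
      have h6 := mul_le_mul_of_nonneg_right h4 h5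
      nlinarith [h3, h6, mul_pos hu2p hv1]
  unfold Df
  nlinarith [key]

private lemma rect_aux {α β : ℝ} (hα0 : 0 < α) (hα1 : α ≤ 1) (hβ0 : 0 < β) (hβ1 : β ≤ 1)
    {u₁ u₂ v₁ v₂ : ℝ} (hu1 : 0 ≤ u₁) (hu12 : u₁ ≤ u₂) (hu2 : u₂ ≤ 1)
    (hv1 : 0 ≤ v₁) (hv12 : v₁ ≤ v₂) (hv2 : v₂ ≤ 1) :
    0 ≤ max 0 (Df α β u₂ v₂) - max 0 (Df α β u₁ v₂) - max 0 (Df α β u₂ v₁)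
      + max 0 (Df α β u₁ v₁) := by
  have hu1' : u₁ ≤ 1 := hu12.trans hu2
  have hv1' : v₁ ≤ 1 := hv12.trans hv2
  have hu2nn : 0 ≤ u₂ := hu1.trans hu12
  have hv2nn : 0 ≤ v₂ := hv1.trans hv12
  rcases le_or_gt (Df α β u₂ v₁) 0 with hA' | hA'
  · -- lower-right corner clipped to 0
    have hmonA := Cf_mono_u hα0 hα1 hβ0 hβ1 hv1 hv1' hu1 hu12 hu2
    rw [max_eq_left hA'] at hmonA
    have h1 : max 0 (Df α β u₁ v₁) = 0 := le_antisymm hmonA (le_max_left _ _)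
    have h2 := Cf_mono_u hα0 hα1 hβ0 hβ1 hv2nn hv2 hu1 hu12 hu2
    rw [max_eq_left hA', h1]
    linarith
  · have hu2p : 0 < u₂ := by
      rcases hu2nn.eq_or_lt with h | h
      · rw [← h, Df_zero_left hα0] at hA'; exact absurd hA' (lt_irrefl 0)
      · exact h
    have hv1p : 0 < v₁ := by
      rcases hv1.eq_or_lt with h | h
      · rw [← h, Df_zero_right hβ0] at hA'; exact absurd hA' (lt_irrefl 0)
      · exact h
    have hB'A' : Df α β u₂ v₁ ≤ Df α β u₂ v₂ :=
      Df_mono_v hα0 hα1 hβ0 hβ1 hu2nn hu2 hv1p hv12 hv2 hA'.le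
    rw [max_eq_right hA'.le, max_eq_right (hA'.le.trans hB'A')]
    rcases lt_or_ge 0 (Df α β u₁ v₁) with hA | hA
    · have hBA : Df α β u₁ v₁ ≤ Df α β u₁ v₂ :=
        Df_mono_v hα0 hα1 hβ0 hβ1 hu1 hu1' hv1p hv12 hv2 hA.le
      rw [max_eq_right hA.le, max_eq_right (hA.le.trans hBA)]
      have hvol := Df_vol hα0 hα1 hβ0 hβ1 hu1 hu12 hu2 hu2p hv1p hv12 hv2 hA'.le
      linarith
    · rw [max_eq_left hA]
      rcases le_or_gt (Df α β u₁ v₂) 0 with hB | hB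
      · rw [max_eq_left hB]; linarith
      · rw [max_eq_right hB.le]
        have hvol := Df_vol hα0 hα1 hβ0 hβ1 hu1 hu12 hu2 hu2p hv1p hv12 hv2 hA'.le
        linarith

/-- For `α, β ∈ (0,1]`, the function `C(u,v) = max {0, uv - (u^α - u)(v^β - v)}` is a
copula: it satisfies the boundary conditions and the rectangle inequality. -/
theorem exp_rmm_is_copula (α β : ℝ) (hα : α ∈ Set.Ioc (0:ℝ) 1) (hβ : β ∈ Set.Ioc (0:ℝ) 1)
    (C : ℝ → ℝ → ℝ)
    (hC : ∀ u v, C u v = max 0 (u * v - (u ^ α - u) * (v ^ β - v))) :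
    (∀ u ∈ Icc (0:ℝ) 1, C u 0 = 0 ∧ C 0 u = 0 ∧ C u 1 = u ∧ C 1 u = u) ∧
    (∀ u₁ u₂ v₁ v₂ : ℝ, 0 ≤ u₁ → u₁ ≤ u₂ → u₂ ≤ 1 → 0 ≤ v₁ → v₁ ≤ v₂ → v₂ ≤ 1 →
      0 ≤ C u₂ v₂ - C u₁ v₂ - C u₂ v₁ + C u₁ v₁) := by
  obtain ⟨hα0, hα1⟩ := hα
  obtain ⟨hβ0, hβ1⟩ := hβ
  have hCD : ∀ u v, C u v = max 0 (Df α β u v) := hC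
  constructor
  · intro u hu
    obtain ⟨hu0, hu1⟩ := hu
    refine ⟨?_, ?_, ?_, ?_⟩
    · rw [hCD, Df_zero_right hβ0]; simp
    · rw [hCD, Df_zero_left hα0]; simp
    · rw [hCD]
      unfold Df
      rw [Real.one_rpow]
      norm_num [max_eq_right hu0]
    · rw [hCD]
      unfold Df
      rw [Real.one_rpow]
      norm_num [max_eq_right hu0]
  · intro u₁ u₂ v₁ v₂ hu1 hu12 hu2 hv1 hv12 hv2
    rw [hCD, hCD, hCD, hCD]
    exact rect_aux hα0 hα1 hβ0 hβ1 hu1 hu12 hu2 hv1 hv12 hv2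
end

section
/- Let (Ω, P) be a probability space and let X, Y, Z₁, Z₂ be real random variables such that X, Y, and the pair (Z₁, Z₂) are mutually independent. Let F_X, F_Y, G₁, G₂ denote the distribution functions of X, Y, Z₁, Z₂ respectively, and assume that P[Z₁ ≤ u, Z₂ ≤ v] = max{0, G₁(u) + G₂(v) − 1} for all u, v ∈ ℝ (i.e., Z₁ and Z₂ are countermonotonic). Set U = min{X, Z₁} and V = min{Y, Z₂}. Then for all u, v ∈ ℝ, the joint survival function satisfies P[U > u, V > v] = (1 − F_X(u))·(1 − F_Y(v))·max{0, 1 − G₁(u) − G₂(v)}. -/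
open MeasureTheory ProbabilityTheory Set

/-- Joint survival function of `(min X Z₁, min Y Z₂)` when `X`, `Y` and the
countermonotonic pair `(Z₁, Z₂)` are mutually independent. -/
theorem smm_joint_survival {Ω : Type*} [MeasurableSpace Ω] (P : Measure Ω)
    [IsProbabilityMeasure P] (X Y Z₁ Z₂ : Ω → ℝ)
    (hX : Measurable X) (hY : Measurable Y) (hZ₁ : Measurable Z₁) (hZ₂ : Measurable Z₂)
    (hind : iIndep
      ![MeasurableSpace.comap X inferInstance,
        MeasurableSpace.comap Y inferInstance,
        MeasurableSpace.comap (fun ω => (Z₁ ω, Z₂ ω)) inferInstance] P)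
    (F_X F_Y G₁ G₂ : ℝ → ℝ)
    (hFX : ∀ x, F_X x = (P {ω | X ω ≤ x}).toReal)
    (hFY : ∀ y, F_Y y = (P {ω | Y ω ≤ y}).toReal)
    (hG₁ : ∀ x, G₁ x = (P {ω | Z₁ ω ≤ x}).toReal)
    (hG₂ : ∀ y, G₂ y = (P {ω | Z₂ ω ≤ y}).toReal)
    (hcounter : ∀ u v, (P {ω | Z₁ ω ≤ u ∧ Z₂ ω ≤ v}).toReal = max 0 (G₁ u + G₂ v - 1))
    (U V : Ω → ℝ)
    (hU : ∀ ω, U ω = min (X ω) (Z₁ ω)) (hV : ∀ ω, V ω = min (Y ω) (Z₂ ω)) :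
    ∀ u v, (P {ω | u < U ω ∧ v < V ω}).toReal =
      (1 - F_X u) * (1 - F_Y v) * max 0 (1 - G₁ u - G₂ v) := by
  intro u v
  set A : Set Ω := {ω | u < X ω} with hAdef
  set B : Set Ω := {ω | v < Y ω} with hBdef
  set C : Set Ω := {ω | u < Z₁ ω ∧ v < Z₂ ω} with hCdef
  -- the event equals A ∩ B ∩ C
  have hset : {ω | u < U ω ∧ v < V ω} = A ∩ B ∩ C := by
    ext ω
    simp only [hU, hV, lt_min_iff, mem_setOf_eq, mem_inter_iff, hAdef, hBdef, hCdef]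
    tauto
  -- independence gives the product
  have hmeas : ∀ i : Fin 3, MeasurableSet[![MeasurableSpace.comap X inferInstance,
        MeasurableSpace.comap Y inferInstance,
        MeasurableSpace.comap (fun ω => (Z₁ ω, Z₂ ω)) inferInstance] i] (![A, B, C] i) := by
    intro i
    fin_cases i
    · exact ⟨Ioi u, measurableSet_Ioi, rfl⟩
    · exact ⟨Ioi v, measurableSet_Ioi, rfl⟩
    · exact ⟨Ioi u ×ˢ Ioi v, measurableSet_Ioi.prod measurableSet_Ioi, rfl⟩
  have hprod : P (A ∩ B ∩ C) = P A * P B * P C := by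
    have h := hind.meas_iInter hmeas
    have h1 : ⋂ i, ![A, B, C] i = A ∩ B ∩ C := by
      ext ω
      simp [Fin.forall_fin_succ, and_assoc]
    have h2 : ∏ i, P (![A, B, C] i) = P A * P B * P C := by
      simp [Fin.prod_univ_three]
    rw [h1, h2] at h
    exact h
  -- survival functions of X and Y
  have hXc : (P A).toReal = 1 - F_X u := by
    have : A = {ω | X ω ≤ u}ᶜ := by ext ω; simp [hAdef, not_le]
    rw [this, measure_compl (s := {ω | X ω ≤ u}) (hX measurableSet_Iic) (measure_ne_top P _), measure_univ,
      ENNReal.toReal_sub_of_le prob_le_one (by simp), hFX, ENNReal.toReal_one]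
  have hYc : (P B).toReal = 1 - F_Y v := by
    have : B = {ω | Y ω ≤ v}ᶜ := by ext ω; simp [hBdef, not_le]
    rw [this, measure_compl (s := {ω | Y ω ≤ v}) (hY measurableSet_Iic) (measure_ne_top P _), measure_univ,
      ENNReal.toReal_sub_of_le prob_le_one (by simp), hFY, ENNReal.toReal_one]
  -- survival of the countermonotonic pair
  have hA'meas : MeasurableSet {ω | Z₁ ω ≤ u} := hZ₁ measurableSet_Iic
  have hB'meas : MeasurableSet {ω | Z₂ ω ≤ v} := hZ₂ measurableSet_Iic
  have hCc : (P C).toReal = max 0 (1 - G₁ u - G₂ v) := by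
    have hCompl : C = ({ω | Z₁ ω ≤ u} ∪ {ω | Z₂ ω ≤ v})ᶜ := by
      ext ω; simp [hCdef, not_le, not_or]
    have hUnion : (P ({ω | Z₁ ω ≤ u} ∪ {ω | Z₂ ω ≤ v})).toReal
        = G₁ u + G₂ v - max 0 (G₁ u + G₂ v - 1) := by
      have key := measure_union_add_inter (μ := P) {ω | Z₁ ω ≤ u} hB'meas
      have key' : (P ({ω | Z₁ ω ≤ u} ∪ {ω | Z₂ ω ≤ v})).toReal
          + (P ({ω | Z₁ ω ≤ u} ∩ {ω | Z₂ ω ≤ v})).toReal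
          = (P {ω | Z₁ ω ≤ u}).toReal + (P {ω | Z₂ ω ≤ v}).toReal := by
        rw [← ENNReal.toReal_add (measure_ne_top P _) (measure_ne_top P _),
          ← ENNReal.toReal_add (measure_ne_top P _) (measure_ne_top P _), key]
      have hint : ({ω | Z₁ ω ≤ u} ∩ {ω | Z₂ ω ≤ v}) = {ω | Z₁ ω ≤ u ∧ Z₂ ω ≤ v} := rfl
      rw [hint, hcounter u v, ← hG₁, ← hG₂] at key'
      linarith
    rw [hCompl, measure_compl ((hA'meas.union hB'meas)) (measure_ne_top P _), measure_univ,
      ENNReal.toReal_sub_of_le prob_le_one (by simp), ENNReal.toReal_one, hUnion]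
    rcases le_total (G₁ u + G₂ v) 1 with h | h
    · rw [max_eq_left (by linarith), max_eq_right (by linarith)]; ring
    · rw [max_eq_right (by linarith), max_eq_left (by linarith)]; ring
  rw [hset, hprod, ENNReal.toReal_mul, ENNReal.toReal_mul, hXc, hYc, hCc]
end
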